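/- arXiv:2007.10123 — 6 statements merged into one kernel-verified Lean document; each statement's English description precedes it below -/
import Mathlib

section
/- Let m, p ∈ ℕ, let S be a real m×p matrix and Γ a real m×m matrix, and define f : ℝ^p × ℝ^m × ℝ^m → ℝ^m by f(δ, z, u) := S·δ + z + Γ·u. Then f has the high-gain property if and only if Γ is sign definite, i.e., ⟨v, Γ·v⟩ ≠ 0 for every v ∈ ℝ^m with v ≠ 0. -/
open Set
open scoped RealInnerProductSpace

noncomputable section

/-- `E m` is Euclidean `m`-space `ℝ^m`. -/
abbrev E (m : ℕ) : Type := EuclideanSpace ℝ (Fin m)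

/-- The identification of a plain vector `Fin n → ℝ` with a point of Euclidean space. -/
def toE {n : ℕ} (v : Fin n → ℝ) : E n := (WithLp.equiv 2 (Fin n → ℝ)).symm v

/-- The identification of a point of Euclidean space with a plain vector `Fin n → ℝ`. -/
def ofE {n : ℕ} (v : E n) : Fin n → ℝ := WithLp.equiv 2 (Fin n → ℝ) v

/-- The high-gain property: there is `v* ∈ (0,1)` such that for every pair of nonempty
compact sets `Kp ⊆ ℝ^p`, `Kq ⊆ ℝ^q`, the function
`χ(s) = min {⟪v, f(δ,z,−s·v)⟫ : δ ∈ Kp, z ∈ Kq, v* ≤ ‖v‖ ≤ 1}` satisfies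
`sup_{s∈ℝ} χ(s) = ∞`. -/
def HighGain (p q m : ℕ) (f : E p → E q → E m → E m) : Prop :=
  ∃ vs : ℝ, vs ∈ Ioo (0 : ℝ) 1 ∧
    ∀ Kp : Set (E p), ∀ Kq : Set (E q),
      IsCompact Kp → IsCompact Kq → Kp.Nonempty → Kq.Nonempty →
      ∀ M : ℝ, ∃ s : ℝ,
        M < sInf {x : ℝ | ∃ δ ∈ Kp, ∃ z ∈ Kq, ∃ v : E m,
          vs ≤ ‖v‖ ∧ ‖v‖ ≤ 1 ∧ x = ⟪v, f δ z (-(s • v))⟫}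

/-- The linear right-hand side `f(δ, z, u) = S·δ + z + Γ·u` arising from a linear system
with strict relative degree and high-frequency gain matrix `Γ`. -/
def linRHS (m p : ℕ) (S : Matrix (Fin m) (Fin p) ℝ) (Γ : Matrix (Fin m) (Fin m) ℝ)
    (δ : E p) (z : E m) (u : E m) : E m :=
  toE (S.mulVec (ofE δ)) + z + toE (Γ.mulVec (ofE u))

namespace HGaux
variable {m p : ℕ}

def Q (Γ : Matrix (Fin m) (Fin m) ℝ) (v : E m) : ℝ := ⟪v, toE (Γ.mulVec (ofE v))⟫

lemma contG {k q : ℕ} (S : Matrix (Fin k) (Fin q) ℝ) :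
    Continuous fun v : E q => toE (S.mulVec (ofE v)) :=
  (PiLp.continuous_toLp 2 _).comp
    ((S.mulVecLin.continuous_of_finiteDimensional).comp (PiLp.continuous_ofLp 2 _))

lemma contQ (Γ : Matrix (Fin m) (Fin m) ℝ) : Continuous (Q Γ) :=
  Continuous.inner continuous_id (contG Γ)

lemma Q_smul (Γ : Matrix (Fin m) (Fin m) ℝ) (c : ℝ) (v : E m) :
    Q Γ (c • v) = c ^ 2 * Q Γ v := by
  have h1 : ofE (c • v) = c • ofE v := rfl
  have h2 : toE (Γ.mulVec (c • ofE v)) = c • toE (Γ.mulVec (ofE v)) := by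
    rw [Γ.mulVec_smul]; rfl
  rw [Q, h1, h2, inner_smul_left, inner_smul_right]
  simp [Q]; ring

lemma inner_linRHS (S : Matrix (Fin m) (Fin p) ℝ) (Γ : Matrix (Fin m) (Fin m) ℝ)
    (δ : E p) (z : E m) (v : E m) (s : ℝ) :
    ⟪v, linRHS m p S Γ δ z (-(s • v))⟫ =
      ⟪v, toE (S.mulVec (ofE δ))⟫ + ⟪v, z⟫ - s * Q Γ v := by
  have h1 : ofE (-(s • v)) = (-s) • ofE v := by simp [ofE, neg_smul]
  have h2 : toE (Γ.mulVec ((-s) • ofE v)) = (-s) • toE (Γ.mulVec (ofE v)) := by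
    rw [Γ.mulVec_smul]; rfl
  rw [linRHS, h1, h2, inner_add_right, inner_add_right, inner_smul_right]
  simp [Q]; ring

/-- A nonvanishing continuous quadratic form has constant sign on nonzero vectors. -/
lemma sign_const (Γ : Matrix (Fin m) (Fin m) ℝ) (hm : 0 < m)
    (hΓ : ∀ v : E m, v ≠ 0 → Q Γ v ≠ 0) :
    (∀ v : E m, v ≠ 0 → 0 < Q Γ v) ∨ (∀ v : E m, v ≠ 0 → Q Γ v < 0) := by
  have key : ∀ u w : E m, u ≠ 0 → w ≠ 0 → 0 < Q Γ u → 0 < Q Γ w := by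
    intro u w hu hw hQu
    rcases lt_or_gt_of_ne (hΓ w hw) with hQw | hQw
    · exfalso
      by_cases hc : ∃ c : ℝ, w = c • u
      · obtain ⟨c, rfl⟩ := hc
        rw [Q_smul] at hQw
        nlinarith [sq_nonneg c]
      · have hpath : Continuous fun t : ℝ => Q Γ ((1 - t) • u + t • w) :=
          (contQ Γ).comp (((continuous_const.sub continuous_id).smul continuous_const).add
            (continuous_id.smul continuous_const))
        have h0 : (0:ℝ) ∈ Icc (Q Γ ((1-(1:ℝ)) • u + (1:ℝ) • w)) (Q Γ ((1-(0:ℝ)) • u + (0:ℝ) • w)) := by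
          simp only [sub_self, sub_zero, zero_smul, one_smul, add_zero, zero_add]
          exact ⟨le_of_lt hQw, le_of_lt hQu⟩
        have := intermediate_value_Icc' (le_of_lt one_pos) hpath.continuousOn h0
        obtain ⟨t, _, ht⟩ := this
        have hne : (1 - t) • u + t • w ≠ 0 := by
          intro h
          by_cases ht0 : t = 0
          · simp [ht0] at h; exact hu h
          · apply hc
            refine ⟨t⁻¹ * -(1-t), ?_⟩
            rw [← smul_smul, neg_smul, ← eq_neg_of_add_eq_zero_right h, smul_smul,
              inv_mul_cancel₀ ht0, one_smul]
        exact hΓ _ hne ht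
    · exact hQw
  set e : E m := EuclideanSpace.single (⟨0, hm⟩ : Fin m) (1:ℝ) with he
  have hene : e ≠ 0 := by
    intro h
    have h1 : e ⟨0, hm⟩ = 0 := by rw [h]; rfl
    simp [he, EuclideanSpace.single_apply] at h1
  rcases lt_or_gt_of_ne (hΓ e hene) with h | h
  · right; intro v hv
    by_contra hno
    have h1 : 0 < Q Γ v := lt_of_le_of_ne (not_lt.mp hno) (Ne.symm (hΓ v hv))
    exact absurd (key v e hv hene h1) (not_lt.mpr (le_of_lt h))
  · left; exact fun v hv => key e v hene hv h

lemma isCompact_annulus (a : ℝ) : IsCompact {v : E m | a ≤ ‖v‖ ∧ ‖v‖ ≤ 1} := by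
  have h : {v : E m | a ≤ ‖v‖ ∧ ‖v‖ ≤ 1}
      = Metric.closedBall 0 1 ∩ {v : E m | a ≤ ‖v‖} := by
    ext v
    simp only [Metric.mem_closedBall, dist_zero_right, mem_inter_iff, mem_setOf_eq]
    tauto
  rw [h]
  exact (isCompact_closedBall 0 1).inter_right (isClosed_le continuous_const continuous_norm)

lemma forward (hm : 0 < m) (S : Matrix (Fin m) (Fin p) ℝ) (Γ : Matrix (Fin m) (Fin m) ℝ)
    (ε : ℝ) (hsign : ∀ v : E m, v ≠ 0 → 0 < ε * Q Γ v) :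
    HighGain p m m (linRHS m p S Γ) := by
  refine ⟨1/2, ⟨by norm_num, by norm_num⟩, ?_⟩
  intro Kp Kq hKp hKq hKpne hKqne M
  obtain ⟨δ₀, hδ₀⟩ := hKpne
  obtain ⟨z₀, hz₀⟩ := hKqne
  set A : Set (E m) := {v : E m | 1/2 ≤ ‖v‖ ∧ ‖v‖ ≤ 1} with hAdef
  have hA : IsCompact A := isCompact_annulus (1/2)
  set e : E m := EuclideanSpace.single (⟨0, hm⟩ : Fin m) (1:ℝ) with he
  have he1 : ‖e‖ = 1 := by simp [he]
  have heA : e ∈ A := ⟨by rw [he1]; norm_num, le_of_eq he1⟩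
  obtain ⟨v₀, hv₀A, hmin⟩ := hA.exists_isMinOn ⟨e, heA⟩
    ((continuous_const.mul (contQ Γ)).continuousOn (s := A))
  have hv₀ne : v₀ ≠ 0 := by
    intro h
    rw [hAdef] at hv₀A
    simp [h] at hv₀A
    norm_num at hv₀A
  set c : ℝ := ε * Q Γ v₀ with hcdef
  have hc : 0 < c := hsign v₀ hv₀ne
  obtain ⟨δ₁, _, hδ₁⟩ := hKp.exists_isMaxOn ⟨δ₀, hδ₀⟩ ((contG S).norm.continuousOn)
  obtain ⟨z₁, _, hz₁⟩ := hKq.exists_isMaxOn ⟨z₀, hz₀⟩ continuous_norm.continuousOn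
  set Rp : ℝ := ‖toE (S.mulVec (ofE δ₁))‖ with hRp
  set Rq : ℝ := ‖z₁‖ with hRq
  have hRp0 : 0 ≤ Rp := norm_nonneg _
  have hRq0 : 0 ≤ Rq := norm_nonneg _
  set N : ℝ := |M| + Rp + Rq + 1 with hNdef
  have hN0 : 0 ≤ N := by positivity
  refine ⟨-(ε * N) / c, ?_⟩
  have key : ∀ v ∈ A, N ≤ -(-(ε * N) / c) * Q Γ v := by
    intro v hv
    have h1 : c ≤ ε * Q Γ v := hmin hv
    have h2 : -(-(ε * N) / c) * Q Γ v = (N / c) * (ε * Q Γ v) := by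
      field_simp
    rw [h2]
    calc N = (N / c) * c := by field_simp
    _ ≤ (N / c) * (ε * Q Γ v) := by
        exact mul_le_mul_of_nonneg_left h1 (div_nonneg hN0 hc.le)
  have hlb : ∀ x ∈ {x : ℝ | ∃ δ ∈ Kp, ∃ z ∈ Kq, ∃ v : E m,
      1/2 ≤ ‖v‖ ∧ ‖v‖ ≤ 1 ∧ x = ⟪v, linRHS m p S Γ δ z (-((-(ε * N) / c) • v))⟫},
      |M| + 1 ≤ x := by
    rintro x ⟨δ, hδ, z, hz, v, hv1, hv2, rfl⟩
    rw [inner_linRHS]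
    have hvA : v ∈ A := ⟨hv1, hv2⟩
    have b1 : -Rp ≤ ⟪v, toE (S.mulVec (ofE δ))⟫ := by
      have h3 := abs_real_inner_le_norm v (toE (S.mulVec (ofE δ)))
      have h4 : ‖toE (S.mulVec (ofE δ))‖ ≤ Rp := hδ₁ hδ
      have h5 := abs_le.mp h3
      nlinarith [norm_nonneg (toE (S.mulVec (ofE δ))), norm_nonneg v]
    have b2 : -Rq ≤ ⟪v, z⟫ := by
      have h3 := abs_real_inner_le_norm v z
      have h4 : ‖z‖ ≤ Rq := hz₁ hz
      have h5 := abs_le.mp h3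
      nlinarith [norm_nonneg z, norm_nonneg v]
    have b3 := key v hvA
    rw [hNdef] at b3
    linarith
  have hne : ∃ x, x ∈ {x : ℝ | ∃ δ ∈ Kp, ∃ z ∈ Kq, ∃ v : E m,
      1/2 ≤ ‖v‖ ∧ ‖v‖ ≤ 1 ∧ x = ⟪v, linRHS m p S Γ δ z (-((-(ε * N) / c) • v))⟫} :=
    ⟨_, ⟨δ₀, hδ₀, z₀, hz₀, e, by rw [he1]; norm_num, le_of_eq he1, rfl⟩⟩
  have := le_csInf hne hlb
  have hM : M < |M| + 1 := by linarith [le_abs_self M]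
  exact lt_of_lt_of_le hM this

end HGaux

/-- **Sign-definite high-frequency gain (Section 2.1.3)**.
For `f(δ,z,u) = S·δ + z + Γ·u`, the high-gain property holds if, and only if, `Γ` is
sign definite, i.e. `⟨v, Γ·v⟩ ≠ 0` for every `v ≠ 0`. -/
theorem highGain_iff_sign_definite (m p : ℕ) (hm : 0 < m)
    (S : Matrix (Fin m) (Fin p) ℝ) (Γ : Matrix (Fin m) (Fin m) ℝ) :
    HighGain p m m (linRHS m p S Γ) ↔
      ∀ v : E m, v ≠ 0 → ⟪v, toE (Γ.mulVec (ofE v))⟫ ≠ (0 : ℝ) := by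
  constructor
  · rintro ⟨vs, ⟨hvs0, hvs1⟩, H⟩ v hv hQ0
    obtain ⟨s, hs⟩ := H {0} {0} isCompact_singleton isCompact_singleton
      (singleton_nonempty 0) (singleton_nonempty 0) 0
    set w : E m := ‖v‖⁻¹ • v with hw
    have hw1 : ‖w‖ = 1 := norm_smul_inv_norm hv
    have hQw : HGaux.Q Γ w = 0 := by
      rw [hw, HGaux.Q_smul]
      have : HGaux.Q Γ v = 0 := hQ0
      rw [this, mul_zero]
    have hx0 : ⟪w, linRHS m p S Γ 0 0 (-(s • w))⟫ = 0 := by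
      rw [HGaux.inner_linRHS]
      have h1 : toE (S.mulVec (ofE (0 : E p))) = 0 := by
        have : ofE (0 : E p) = 0 := rfl
        rw [this, Matrix.mulVec_zero]; rfl
      rw [h1, hQw]
      simp
    set Sset : Set ℝ := {x : ℝ | ∃ δ ∈ ({0} : Set (E p)), ∃ z ∈ ({0} : Set (E m)),
      ∃ v' : E m, vs ≤ ‖v'‖ ∧ ‖v'‖ ≤ 1 ∧ x = ⟪v', linRHS m p S Γ δ z (-(s • v'))⟫} with hSdef
    have hmem0 : (0:ℝ) ∈ Sset := by
      refine ⟨0, rfl, 0, rfl, w, ?_, le_of_eq hw1, hx0.symm⟩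
      rw [hw1]; exact hvs1.le
    have gcont : Continuous fun v' : E m => ⟪v', linRHS m p S Γ 0 0 (-(s • v'))⟫ := by
      apply Continuous.inner continuous_id
      unfold linRHS
      exact continuous_const.add ((HGaux.contG Γ).comp ((continuous_id.const_smul s).neg))
    have hsub : Sset ⊆ (fun v' : E m => ⟪v', linRHS m p S Γ 0 0 (-(s • v'))⟫) ''
        {v' : E m | vs ≤ ‖v'‖ ∧ ‖v'‖ ≤ 1} := by
      rintro x ⟨δ, hδ, z, hz, v', h1, h2, rfl⟩
      rw [mem_singleton_iff] at hδ hz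
      subst hδ; subst hz
      exact ⟨v', ⟨h1, h2⟩, rfl⟩
    have hbdd : BddBelow Sset :=
      BddBelow.mono hsub ((HGaux.isCompact_annulus vs).image gcont).bddBelow
    have : sInf Sset ≤ 0 := csInf_le hbdd hmem0
    linarith
  · intro hsd
    rcases HGaux.sign_const Γ hm hsd with h | h
    · exact HGaux.forward hm S Γ 1 (fun v hv => by
        have := h v hv; simpa using this)
    · exact HGaux.forward hm S Γ (-1) (fun v hv => by
        have := h v hv; simp only [neg_mul, one_mul]; linarith)
end
end

section
/- Let m, p ∈ ℕ, let S be a real m×p matrix and Γ a real m×m matrix, and define f : ℝ^p × ℝ^m × ℝ^m → ℝ^m by f(δ, z, u) := S·δ + z + Γ·u. If Γ is positive definite in the sense that ⟨v, Γ·v⟩ > 0 for all v ∈ ℝ^m with v ≠ 0, then f has the positive-definite high-gain property with v* = 1/2: for every compact K_p ⊆ ℝ^p and every compact K_q ⊆ ℝ^m, the function χ (with v* = 1/2) satisfies sup_{s<0} χ(s) = ∞. If instead −Γ is positive definite, then f has the negative-definite high-gain property: sup_{s>0} χ(s) = ∞ for every such pair of compact sets. -/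
open Set
open scoped RealInnerProductSpace

noncomputable section

/-- The function `χ` associated with `f` and the parameter `v* ∈ (0,1)` and the pair of
compact sets `Kp, Kq`:
`χ(s) = min {⟪v, f(δ,z,−s·v)⟫ : δ ∈ Kp, z ∈ Kq, v* ≤ ‖v‖ ≤ 1}`. -/
def chiFun (p q m : ℕ) (f : E p → E q → E m → E m) (vs : ℝ)
    (Kp : Set (E p)) (Kq : Set (E q)) (s : ℝ) : ℝ :=
  sInf {x : ℝ | ∃ δ ∈ Kp, ∃ z ∈ Kq, ∃ v : E m,
    vs ≤ ‖v‖ ∧ ‖v‖ ≤ 1 ∧ x = ⟪v, f δ z (-(s • v))⟫}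

lemma inner_linRHS (m p : ℕ) (S : Matrix (Fin m) (Fin p) ℝ) (Γ : Matrix (Fin m) (Fin m) ℝ)
    (δ : E p) (z : E m) (s : ℝ) (v : E m) :
    ⟪v, linRHS m p S Γ δ z (-(s • v))⟫ =
      ⟪v, toE (S.mulVec (ofE δ))⟫ + ⟪v, z⟫ + (-s) * ⟪v, toE (Γ.mulVec (ofE v))⟫ := by
  have h1 : ofE (-(s • v)) = (-s) • ofE v := by
    unfold ofE; simp [neg_smul]
  unfold linRHS
  rw [inner_add_right, inner_add_right, h1, Matrix.mulVec_smul]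
  have h2 : toE ((-s) • Γ.mulVec (ofE v)) = (-s) • toE (Γ.mulVec (ofE v)) := by
    unfold toE; simp
  rw [h2, real_inner_smul_right]

lemma key_highGain (m p : ℕ) (hm : 0 < m)
    (S : Matrix (Fin m) (Fin p) ℝ) (Γ : Matrix (Fin m) (Fin m) ℝ)
    (hΓ : ∀ v : E m, v ≠ 0 → (0 : ℝ) < ⟪v, toE (Γ.mulVec (ofE v))⟫)
    (Kp : Set (E p)) (Kq : Set (E m))
    (hKp : IsCompact Kp) (hKq : IsCompact Kq) (hKpne : Kp.Nonempty) (hKqne : Kq.Nonempty)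
    (M : ℝ) : ∃ s : ℝ, s < 0 ∧ M < chiFun p m m (linRHS m p S Γ) (1 / 2) Kp Kq s := by
  -- the quadratic form
  set g : E m → ℝ := fun v => ⟪v, toE (Γ.mulVec (ofE v))⟫ with hg_def
  have hg : Continuous g := by
    have h1 : Continuous fun v : E m => toE (Γ.mulVec (ofE v)) := by
      have : Continuous fun w : Fin m → ℝ => Γ.mulVec w :=
        (Matrix.mulVecLin Γ).continuous_of_finiteDimensional
      exact (PiLp.continuous_toLp 2 (fun _ : Fin m => ℝ)).comp
        (this.comp (PiLp.continuous_ofLp 2 (fun _ : Fin m => ℝ)))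
    exact continuous_inner.comp (continuous_id.prodMk h1)
  -- the annulus
  set A : Set (E m) := Metric.closedBall 0 1 ∩ {v : E m | 1 / 2 ≤ ‖v‖} with hA_def
  have hA : IsCompact A :=
    (isCompact_closedBall (0 : E m) 1).inter_right (isClosed_le continuous_const continuous_norm)
  have hmemA : ∀ v : E m, 1 / 2 ≤ ‖v‖ → ‖v‖ ≤ 1 → v ∈ A := fun v h1 h2 =>
    ⟨mem_closedBall_zero_iff.mpr h2, h1⟩
  set v₁ : E m := EuclideanSpace.single (⟨0, hm⟩ : Fin m) (1 : ℝ) with hv₁_def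
  have hv₁ : ‖v₁‖ = 1 := by simp [hv₁_def, EuclideanSpace.norm_single]
  have hAne : A.Nonempty := ⟨v₁, hmemA v₁ (by rw [hv₁]; norm_num) (le_of_eq hv₁)⟩
  obtain ⟨v₀, hv₀A, hv₀min⟩ := hA.exists_isMinOn hAne hg.continuousOn
  set γ : ℝ := g v₀ with hγ_def
  have hv₀ne : v₀ ≠ 0 := by
    intro h
    have := hv₀A.2
    rw [h] at this
    simp at this
    linarith
  have hγ : 0 < γ := hΓ v₀ hv₀ne
  -- bounds on compacts
  have hScont : ContinuousOn (fun δ : E p => toE (S.mulVec (ofE δ))) Kp := by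
    have : Continuous fun w : Fin p → ℝ => S.mulVec w :=
      (Matrix.mulVecLin S).continuous_of_finiteDimensional
    exact ((PiLp.continuous_toLp 2 (fun _ : Fin m => ℝ)).comp
      (this.comp (PiLp.continuous_ofLp 2 (fun _ : Fin p => ℝ)))).continuousOn
  obtain ⟨Cp, hCp⟩ := hKp.exists_bound_of_continuousOn hScont
  obtain ⟨Cq, hCq⟩ := hKq.exists_bound_of_continuousOn (continuousOn_id (s := Kq))
  have hCp0 : 0 ≤ Cp := le_trans (norm_nonneg _) (hCp hKpne.choose hKpne.choose_spec)
  have hCq0 : 0 ≤ Cq := le_trans (norm_nonneg _) (hCq hKqne.choose hKqne.choose_spec)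
  -- choose s
  set s : ℝ := -((max M 0 + Cp + Cq + 1) / γ) with hs_def
  have hnum : 0 < max M 0 + Cp + Cq + 1 := by
    have : (0:ℝ) ≤ max M 0 := le_max_right M 0
    linarith
  have hs_neg : s < 0 := by
    rw [hs_def, neg_lt, neg_zero]
    exact div_pos hnum hγ
  refine ⟨s, hs_neg, ?_⟩
  have hnegs : -s = (max M 0 + Cp + Cq + 1) / γ := by rw [hs_def, neg_neg]
  have hnegs_nonneg : 0 ≤ -s := by rw [hnegs]; positivity
  -- lower bound on the set
  have hlb : ∀ x ∈ {x : ℝ | ∃ δ ∈ Kp, ∃ z ∈ Kq, ∃ v : E m,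
      (1:ℝ) / 2 ≤ ‖v‖ ∧ ‖v‖ ≤ 1 ∧ x = ⟪v, linRHS m p S Γ δ z (-(s • v))⟫},
      max M 0 + 1 ≤ x := by
    rintro x ⟨δ, hδ, z, hz, v, hv1, hv2, rfl⟩
    rw [inner_linRHS]
    have hb1 : -Cp ≤ ⟪v, toE (S.mulVec (ofE δ))⟫ := by
      have h1 := abs_real_inner_le_norm v (toE (S.mulVec (ofE δ)))
      have h2 : ‖v‖ * ‖toE (S.mulVec (ofE δ))‖ ≤ Cp := by
        have := hCp δ hδ
        nlinarith [norm_nonneg (toE (S.mulVec (ofE δ)))]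
      have := neg_abs_le ⟪v, toE (S.mulVec (ofE δ))⟫
      linarith
    have hb2 : -Cq ≤ ⟪v, z⟫ := by
      have h1 := abs_real_inner_le_norm v z
      have h2 : ‖v‖ * ‖z‖ ≤ Cq := by
        have := hCq z hz
        simp only [id_eq] at this
        nlinarith [norm_nonneg z]
      have := neg_abs_le ⟪v, z⟫
      linarith
    have hb3 : γ ≤ g v := hv₀min (hmemA v hv1 hv2)
    have hb4 : (-s) * γ ≤ (-s) * g v := mul_le_mul_of_nonneg_left hb3 hnegs_nonneg
    have hb5 : (-s) * γ = max M 0 + Cp + Cq + 1 := by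
      rw [hnegs, div_mul_cancel₀ _ (ne_of_gt hγ)]
    rw [hb5] at hb4
    linarith
  -- the set is nonempty
  obtain ⟨δ₀, hδ₀⟩ := hKpne
  obtain ⟨z₀, hz₀⟩ := hKqne
  have hne : {x : ℝ | ∃ δ ∈ Kp, ∃ z ∈ Kq, ∃ v : E m,
      (1:ℝ) / 2 ≤ ‖v‖ ∧ ‖v‖ ≤ 1 ∧ x = ⟪v, linRHS m p S Γ δ z (-(s • v))⟫}.Nonempty :=
    ⟨_, δ₀, hδ₀, z₀, hz₀, v₁, by rw [hv₁]; norm_num, le_of_eq hv₁, rfl⟩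
  have h := le_csInf hne hlb
  have hM : M < max M 0 + 1 := by
    have := le_max_left M 0
    linarith
  exact lt_of_lt_of_le hM h

lemma linRHS_neg_flip (m p : ℕ) (S : Matrix (Fin m) (Fin p) ℝ) (Γ : Matrix (Fin m) (Fin m) ℝ)
    (δ : E p) (z : E m) (s : ℝ) (v : E m) :
    linRHS m p S Γ δ z (-((-s) • v)) = linRHS m p S (-Γ) δ z (-(s • v)) := by
  unfold linRHS
  congr 1
  have h1 : ofE (-((-s) • v)) = s • ofE v := by unfold ofE; simp
  have h2 : ofE (-(s • v)) = (-s) • ofE v := by unfold ofE; simp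
  rw [h1, h2, Matrix.mulVec_smul, Matrix.mulVec_smul, Matrix.neg_mulVec]
  simp [smul_smul]

/-- **Definite high-gain properties of linear systems**.
For `f(δ,z,u) = S·δ + z + Γ·u`: if `Γ` is positive definite (`⟨v,Γv⟩ > 0` for `v ≠ 0`),
then `f` has the positive-definite high-gain property with `v* = 1/2`, i.e.
`sup_{s<0} χ(s) = ∞` for every pair of nonempty compact sets; if `−Γ` is positive
definite, then `f` has the negative-definite high-gain property, i.e.
`sup_{s>0} χ(s) = ∞` for every such pair. -/
theorem linRHS_definite_highGain (m p : ℕ) (hm : 0 < m)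
    (S : Matrix (Fin m) (Fin p) ℝ) (Γ : Matrix (Fin m) (Fin m) ℝ) :
    ((∀ v : E m, v ≠ 0 → (0 : ℝ) < ⟪v, toE (Γ.mulVec (ofE v))⟫) →
      ∀ Kp : Set (E p), ∀ Kq : Set (E m),
        IsCompact Kp → IsCompact Kq → Kp.Nonempty → Kq.Nonempty →
        ∀ M : ℝ, ∃ s : ℝ, s < 0 ∧
          M < chiFun p m m (linRHS m p S Γ) (1 / 2) Kp Kq s) ∧
    ((∀ v : E m, v ≠ 0 → (0 : ℝ) < ⟪v, toE ((-Γ).mulVec (ofE v))⟫) →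
      ∀ Kp : Set (E p), ∀ Kq : Set (E m),
        IsCompact Kp → IsCompact Kq → Kp.Nonempty → Kq.Nonempty →
        ∀ M : ℝ, ∃ s : ℝ, 0 < s ∧
          M < chiFun p m m (linRHS m p S Γ) (1 / 2) Kp Kq s) := by
  constructor
  · intro hΓ Kp Kq hKp hKq hKpne hKqne M
    exact key_highGain m p hm S Γ hΓ Kp Kq hKp hKq hKpne hKqne M
  · intro hΓ Kp Kq hKp hKq hKpne hKqne M
    obtain ⟨s, hs, hchi⟩ := key_highGain m p hm S (-Γ) hΓ Kp Kq hKp hKq hKpne hKqne M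
    refine ⟨-s, by linarith, ?_⟩
    have heq : chiFun p m m (linRHS m p S Γ) (1 / 2) Kp Kq (-s)
        = chiFun p m m (linRHS m p S (-Γ)) (1 / 2) Kp Kq s := by
      unfold chiFun
      congr 1
      ext x
      constructor
      · rintro ⟨δ, hδ, z, hz, v, h1, h2, rfl⟩
        exact ⟨δ, hδ, z, hz, v, h1, h2, by rw [linRHS_neg_flip]⟩
      · rintro ⟨δ, hδ, z, hz, v, h1, h2, rfl⟩
        exact ⟨δ, hδ, z, hz, v, h1, h2, by rw [linRHS_neg_flip]⟩
    rw [heq]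
    exact hchi
end
end

section
/- Let m ∈ ℕ, let L₁, L₂ be real m×m matrices, and let σ ∈ {−1, 1} be such that ⟨v, σ·L₂·v⟩ > 0 for all v ∈ ℝ^m with v ≠ 0 (i.e., L₂ is sign definite with sign σ). Then there exists k* > 0 such that for all k ≥ k* and all λ ∈ ℂ: det(λ·I_m − k^{−1}·L₁ + σ·L₂) = 0 implies Re λ < 0. Consequently, for all k ≥ k*, every eigenvalue of the matrix L₁ − σ·k·L₂ has negative real part, i.e., the feedback u(t) = −σ·k·y(t) renders the linear system ẏ(t) = L₁·y(t) + L₂·u(t) exponentially stable. -/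
open Matrix

noncomputable section

private lemma hg_coercive (m : ℕ) (hm : 0 < m) (A : Matrix (Fin m) (Fin m) ℝ)
    (hdef : ∀ v : Fin m → ℝ, v ≠ 0 → 0 < v ⬝ᵥ A.mulVec v) :
    ∃ α : ℝ, 0 < α ∧ ∀ v : Fin m → ℝ, α * (v ⬝ᵥ v) ≤ v ⬝ᵥ A.mulVec v := by
  set S : Set (Fin m → ℝ) := {v | v ⬝ᵥ v = 1} with hS
  have hcont : Continuous fun v : Fin m → ℝ => v ⬝ᵥ A.mulVec v := by
    simp only [dotProduct, mulVec]; fun_prop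
  have hcont2 : Continuous fun v : Fin m → ℝ => v ⬝ᵥ v := by
    simp only [dotProduct]; fun_prop
  have hclosed : IsClosed S := isClosed_eq hcont2 continuous_const
  have hbdd : S ⊆ Metric.closedBall 0 1 := by
    intro v hv
    simp only [Metric.mem_closedBall, dist_zero_right]
    rw [pi_norm_le_iff_of_nonneg zero_le_one]
    intro i
    have h1 : v i * v i ≤ v ⬝ᵥ v :=
      Finset.single_le_sum (fun j _ => mul_self_nonneg (v j)) (Finset.mem_univ i)
    rw [hv] at h1
    rw [Real.norm_eq_abs, abs_le]
    constructor <;> nlinarith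
  have hcompact : IsCompact S :=
    (isCompact_closedBall (0 : Fin m → ℝ) 1).of_isClosed_subset hclosed hbdd
  have hne : S.Nonempty := by
    refine ⟨fun i => if i = ⟨0, hm⟩ then 1 else 0, ?_⟩
    simp [hS, dotProduct, ite_and, Finset.sum_ite_eq']
  obtain ⟨v₀, hv₀S, hmin⟩ := hcompact.exists_isMinOn hne hcont.continuousOn
  have hv₀ne : v₀ ≠ 0 := by
    intro h; rw [hS, Set.mem_setOf_eq, h] at hv₀S; simp [dotProduct] at hv₀S
  refine ⟨v₀ ⬝ᵥ A.mulVec v₀, hdef v₀ hv₀ne, fun v => ?_⟩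
  by_cases hv : v = 0
  · simp [hv]
  · have hvv : 0 < v ⬝ᵥ v := by
      rcases Function.ne_iff.mp hv with ⟨i, hi⟩
      exact Finset.sum_pos' (fun j _ => mul_self_nonneg _)
        ⟨i, Finset.mem_univ i, mul_self_pos.mpr hi⟩
    set t : ℝ := Real.sqrt (v ⬝ᵥ v) with ht
    have htpos : 0 < t := Real.sqrt_pos.mpr hvv
    have htsq : t * t = v ⬝ᵥ v := Real.mul_self_sqrt hvv.le
    have hu : (t⁻¹ • v) ∈ S := by
      rw [hS, Set.mem_setOf_eq, smul_dotProduct, dotProduct_smul, smul_eq_mul, smul_eq_mul]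
      field_simp
      linarith [htsq]
    have hmin' := hmin hu
    have hexp : (t⁻¹ • v) ⬝ᵥ A.mulVec (t⁻¹ • v) = t⁻¹ * t⁻¹ * (v ⬝ᵥ A.mulVec v) := by
      rw [mulVec_smul, smul_dotProduct, dotProduct_smul, smul_eq_mul, smul_eq_mul]; ring
    rw [Set.mem_setOf_eq] at hmin'
    simp only [hexp] at hmin'
    have := mul_le_mul_of_nonneg_left hmin' (le_of_lt (mul_pos htpos htpos))
    calc v₀ ⬝ᵥ A.mulVec v₀ * (v ⬝ᵥ v) = t * t * (v₀ ⬝ᵥ A.mulVec v₀) := by rw [htsq]; ring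
    _ ≤ t * t * (t⁻¹ * t⁻¹ * (v ⬝ᵥ A.mulVec v)) := this
    _ = v ⬝ᵥ A.mulVec v := by field_simp

private lemma hg_re_dot (m : ℕ) (A : Matrix (Fin m) (Fin m) ℝ) (w : Fin m → ℂ) :
    (star w ⬝ᵥ (A.map Complex.ofReal).mulVec w).re
      = (fun i => (w i).re) ⬝ᵥ A.mulVec (fun i => (w i).re)
        + (fun i => (w i).im) ⬝ᵥ A.mulVec (fun i => (w i).im) := by
  simp only [dotProduct, mulVec, Pi.star_apply, Matrix.map_apply, Complex.re_sum,
    Finset.mul_sum, Complex.mul_re, Complex.mul_im, Complex.ofReal_re, Complex.ofReal_im,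
    RCLike.star_def, Complex.conj_re, Complex.conj_im]
  rw [← Finset.sum_add_distrib]
  refine Finset.sum_congr rfl fun i _ => ?_
  rw [← Finset.sum_add_distrib]
  refine Finset.sum_congr rfl fun j _ => ?_
  ring

set_option maxHeartbeats 1600000 in
private lemma hg_core (m : ℕ) (hm : 0 < m) (L₁ A : Matrix (Fin m) (Fin m) ℝ)
    (α : ℝ) (hα : 0 < α)
    (hcoer : ∀ v : Fin m → ℝ, α * (v ⬝ᵥ v) ≤ v ⬝ᵥ A.mulVec v)
    (C : ℝ) (hC : C = ∑ i, ∑ j, |L₁ i j|)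
    (k : ℝ) (hk : (C + 1) / α ≤ k) (lam : ℂ)
    (hdet : Matrix.det (lam • (1 : Matrix (Fin m) (Fin m) ℂ)
        - (k⁻¹ : ℂ) • L₁.map Complex.ofReal + A.map Complex.ofReal) = 0) :
    lam.re < 0 := by
  have hCnn : 0 ≤ C := by
    rw [hC]; positivity
  have hk0 : 0 < k := lt_of_lt_of_le (by positivity) hk
  -- eigenvector
  obtain ⟨w, hwne, hw⟩ := (Matrix.exists_mulVec_eq_zero_iff).mpr hdet
  set x : Fin m → ℝ := fun i => (w i).re with hx
  set y : Fin m → ℝ := fun i => (w i).im with hy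
  set N : ℝ := ∑ i, Complex.normSq (w i) with hN
  have hNpos : 0 < N := by
    rcases Function.ne_iff.mp hwne with ⟨i, hi⟩
    exact Finset.sum_pos' (fun j _ => Complex.normSq_nonneg _)
      ⟨i, Finset.mem_univ i, Complex.normSq_pos.mpr hi⟩
  have hdsum : star w ⬝ᵥ w = ((N : ℝ) : ℂ) := by
    simp [dotProduct, Complex.normSq_eq_conj_mul_self, hN]
  have hdot0 : star w ⬝ᵥ ((lam • (1 : Matrix (Fin m) (Fin m) ℂ)
      - (k⁻¹ : ℂ) • L₁.map Complex.ofReal + A.map Complex.ofReal).mulVec w) = 0 := by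
    rw [hw]; simp [dotProduct]
  rw [add_mulVec, sub_mulVec, smul_mulVec, smul_mulVec, one_mulVec,
    dotProduct_add, dotProduct_sub, dotProduct_smul, dotProduct_smul, hdsum] at hdot0
  have hre := congrArg Complex.re hdot0
  simp only [Complex.add_re, Complex.sub_re, Complex.zero_re, smul_eq_mul,
    Complex.mul_re, Complex.ofReal_re, Complex.ofReal_im, Complex.inv_re, Complex.inv_im,
    Complex.normSq_ofReal, mul_zero, zero_mul, sub_zero, zero_sub, neg_zero, zero_div] at hre
  have hkk : k / (k * k) = k⁻¹ := by field_simp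
  rw [hkk] at hre
  have hd1 : (star w ⬝ᵥ (L₁.map Complex.ofReal).mulVec w).re
      = x ⬝ᵥ L₁.mulVec x + y ⬝ᵥ L₁.mulVec y := hg_re_dot m L₁ w
  have hdA : (star w ⬝ᵥ (A.map Complex.ofReal).mulVec w).re
      = x ⬝ᵥ A.mulVec x + y ⬝ᵥ A.mulVec y := hg_re_dot m A w
  have hNsplit : N = x ⬝ᵥ x + y ⬝ᵥ y := by
    simp only [hN, dotProduct, hx, hy, Complex.normSq_apply, ← Finset.sum_add_distrib]
  have hcoerw : α * N ≤ x ⬝ᵥ A.mulVec x + y ⬝ᵥ A.mulVec y := by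
    rw [hNsplit, mul_add]
    exact add_le_add (hcoer x) (hcoer y)
  have hiN : ∀ i, x i * x i + y i * y i ≤ N := by
    intro i
    have := Finset.single_le_sum (f := fun j => Complex.normSq (w j))
      (fun j _ => Complex.normSq_nonneg _) (Finset.mem_univ i)
    simpa [Complex.normSq_apply, hx, hy, hN] using this
  have hbound : |x ⬝ᵥ L₁.mulVec x + y ⬝ᵥ L₁.mulVec y| ≤ C * N := by
    have heq : x ⬝ᵥ L₁.mulVec x + y ⬝ᵥ L₁.mulVec y
        = ∑ i, ∑ j, L₁ i j * (x i * x j + y i * y j) := by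
      simp only [dotProduct, mulVec, Finset.mul_sum, ← Finset.sum_add_distrib]
      exact Finset.sum_congr rfl fun i _ => Finset.sum_congr rfl fun j _ => by ring
    rw [heq, hC, Finset.sum_mul]
    refine (Finset.abs_sum_le_sum_abs _ _).trans (Finset.sum_le_sum fun i _ => ?_)
    rw [Finset.sum_mul]
    refine (Finset.abs_sum_le_sum_abs _ _).trans (Finset.sum_le_sum fun j _ => ?_)
    rw [abs_mul]
    refine mul_le_mul_of_nonneg_left ?_ (abs_nonneg _)
    rw [abs_le]
    have h1 := hiN i
    have h2 := hiN j
    constructor <;> nlinarith [sq_nonneg (x i - x j), sq_nonneg (y i - y j),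
      sq_nonneg (x i + x j), sq_nonneg (y i + y j)]
  -- assemble
  have hmain : lam.re * N = k⁻¹ * (star w ⬝ᵥ (L₁.map Complex.ofReal).mulVec w).re
      - (star w ⬝ᵥ (A.map Complex.ofReal).mulVec w).re := by linarith [hre]
  have hklt : k⁻¹ * C < α := by
    have h3 : C + 1 ≤ k * α := by
      rw [div_le_iff₀ hα] at hk; linarith
    have h4 := mul_le_mul_of_nonneg_left h3 (inv_pos.mpr hk0).le
    have h5 : k⁻¹ * (k * α) = α := by field_simp
    have h6 : 0 < k⁻¹ := inv_pos.mpr hk0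
    nlinarith
  have hfin : lam.re * N < 0 := by
    have h7 : k⁻¹ * (star w ⬝ᵥ (L₁.map Complex.ofReal).mulVec w).re ≤ k⁻¹ * (C * N) := by
      refine mul_le_mul_of_nonneg_left ?_ (inv_pos.mpr hk0).le
      rw [hd1]
      exact (le_abs_self _).trans hbound
    rw [hmain]
    have h8 : α * N ≤ (star w ⬝ᵥ (A.map Complex.ofReal).mulVec w).re := by
      rw [hdA]; exact hcoerw
    have h9 : k⁻¹ * C * N < α * N := mul_lt_mul_of_pos_right hklt hNpos
    have h10 : k⁻¹ * (C * N) = k⁻¹ * C * N := by ring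
    linarith
  by_contra hcon
  push_neg at hcon
  have := mul_nonneg hcon hNpos.le
  linarith

set_option maxHeartbeats 1600000 in
/-- **High-gain stabilizability of linear systems with sign-definite `L₂` (Remark 1.3)**.
If `σ ∈ {−1,1}` is such that `⟨v, σ·L₂·v⟩ > 0` for all `v ≠ 0`, then there exists
`k* > 0` such that for all `k ≥ k*` and all `λ ∈ ℂ`:
`det(λ·I − k⁻¹·L₁ + σ·L₂) = 0` implies `Re λ < 0`; consequently every eigenvalue of
`L₁ − σ·k·L₂` has negative real part, i.e. the feedback `u = −σ·k·y` renders
`ẏ = L₁y + L₂u` exponentially stable. -/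
theorem high_gain_stabilizable (m : ℕ) (hm : 0 < m)
    (L₁ L₂ : Matrix (Fin m) (Fin m) ℝ) (σ : ℝ) (hσ : σ = 1 ∨ σ = -1)
    (hdef : ∀ v : Fin m → ℝ, v ≠ 0 → 0 < v ⬝ᵥ ((σ • L₂).mulVec v)) :
    ∃ kstar : ℝ, 0 < kstar ∧ ∀ k : ℝ, kstar ≤ k →
      (∀ lam : ℂ,
        Matrix.det (lam • (1 : Matrix (Fin m) (Fin m) ℂ)
            - (k⁻¹ : ℂ) • L₁.map Complex.ofReal + (σ : ℂ) • L₂.map Complex.ofReal) = 0 →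
          lam.re < 0) ∧
      (∀ lam : ℂ,
        Matrix.det (lam • (1 : Matrix (Fin m) (Fin m) ℂ)
            - (L₁ - (σ * k) • L₂).map Complex.ofReal) = 0 →
          lam.re < 0) := by
  obtain ⟨α, hα, hcoer⟩ := hg_coercive m hm (σ • L₂) hdef
  set C : ℝ := ∑ i, ∑ j, |L₁ i j| with hC
  have hCnn : 0 ≤ C := by rw [hC]; positivity
  refine ⟨(C + 1) / α, by positivity, fun k hk => ?_⟩
  have hk0 : 0 < k := lt_of_lt_of_le (by positivity) hk
  have hmap : (σ : ℂ) • L₂.map Complex.ofReal = ((σ • L₂).map Complex.ofReal) := by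
    ext i j
    simp [Matrix.map_apply, Matrix.smul_apply, Complex.ofReal_mul, smul_eq_mul]
  have part1 : ∀ lam : ℂ,
      Matrix.det (lam • (1 : Matrix (Fin m) (Fin m) ℂ)
          - (k⁻¹ : ℂ) • L₁.map Complex.ofReal + (σ : ℂ) • L₂.map Complex.ofReal) = 0 →
        lam.re < 0 := by
    intro lam hdet
    rw [hmap] at hdet
    exact hg_core m hm L₁ (σ • L₂) α hα hcoer C hC k hk lam hdet
  refine ⟨part1, fun lam hdet => ?_⟩
  have hkC : (k : ℂ) ≠ 0 := by exact_mod_cast hk0.ne'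
  have hmat : (lam / k) • (1 : Matrix (Fin m) (Fin m) ℂ)
      - (k⁻¹ : ℂ) • L₁.map Complex.ofReal + (σ : ℂ) • L₂.map Complex.ofReal
      = ((k : ℂ)⁻¹) • (lam • (1 : Matrix (Fin m) (Fin m) ℂ)
          - (L₁ - (σ * k) • L₂).map Complex.ofReal) := by
    ext i j
    by_cases h : i = j <;>
      simp [Matrix.smul_apply, Matrix.sub_apply, Matrix.add_apply, Matrix.one_apply,
        Matrix.map_apply, h, smul_eq_mul, Complex.ofReal_sub, Complex.ofReal_mul,
        Complex.ofReal_inv] <;>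
      field_simp <;> ring
  have hdet2 : Matrix.det ((lam / k) • (1 : Matrix (Fin m) (Fin m) ℂ)
      - (k⁻¹ : ℂ) • L₁.map Complex.ofReal + (σ : ℂ) • L₂.map Complex.ofReal) = 0 := by
    rw [hmat, Matrix.det_smul, hdet, mul_zero]
  have := part1 (lam / k) hdet2
  have hre : (lam / (k : ℂ)).re = lam.re / k := by
    rw [Complex.div_ofReal_re]
  rw [hre] at this
  have h2 : lam.re / k * k < 0 * k := mul_lt_mul_of_pos_right this hk0
  rwa [div_mul_cancel₀ _ hk0.ne', zero_mul] at h2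
end
end

section
/- The continuous function N : [0,∞) → ℝ, N(s) = s·sin(s), satisfies limsup_{s→∞} N(s) = +∞ and liminf_{s→∞} N(s) = −∞ (hence N is surjective onto ℝ), but N does not have the Nussbaum properties: indeed, for every k > 0, (1/k)·∫₀^{k} κ·sin(κ) dκ = (sin k)/k − cos k, and sup_{k>0} (1/k)·∫₀^{k} κ·sin(κ) dκ ≤ 2 < ∞, so the condition 'sup_{k>k⁰} (1/(k−k⁰))·∫_{k⁰}^{k} N(κ) dκ = +∞ for every k⁰ ≥ 0' fails at k⁰ = 0. -/
open Set Filter Real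

/-!
At the points `π/2 + 2nπ` and `3π/2 + 2nπ`, which go to infinity, `s · sin s` equals `s` and
`-s`, so it is unbounded in both directions and, by the intermediate value theorem on `[0, ∞)`,
surjective. Yet `sin k - k cos k` is an antiderivative of `κ sin κ`, so the running average
`(1/k) ∫₀ᵏ κ sin κ dκ = sin k / k - cos k` never exceeds `1 + 1`.
-/

theorem frequently_sin_eq_one_atTop : ∃ᶠ s in atTop, sin s = 1 := by
  have hs : Tendsto (fun n : ℕ => π / 2 + n * (2 * π)) atTop atTop :=
    tendsto_atTop_add_const_left _ _
      (tendsto_natCast_atTop_atTop.atTop_mul_const (by positivity))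
  exact hs.frequently (Frequently.of_forall fun n => by simp)

theorem frequently_sin_eq_neg_one_atTop : ∃ᶠ s in atTop, sin s = -1 := by
  have hs : Tendsto (fun s => s + π) atTop atTop := tendsto_atTop_add_const_right _ _ tendsto_id
  exact hs.frequently (frequently_sin_eq_one_atTop.mono fun s hs => by simp [sin_add_pi, hs])

theorem frequently_le_mul_sin_atTop (c : ℝ) : ∃ᶠ s in atTop, c ≤ s * sin s :=
  (frequently_sin_eq_one_atTop.and_eventually (eventually_ge_atTop c)).mono
    fun s ⟨hs, hcs⟩ => by rwa [hs, mul_one]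

theorem frequently_mul_sin_le_atTop (c : ℝ) : ∃ᶠ s in atTop, s * sin s ≤ c :=
  (frequently_sin_eq_neg_one_atTop.and_eventually (eventually_ge_atTop (-c))).mono
    fun s ⟨hs, hcs⟩ => by rw [hs]; linarith

theorem EReal.limsup_coe_eq_top_of_forall_frequently_ge {α : Type*} {l : Filter α}
    {f : α → ℝ} (hf : ∀ c, ∃ᶠ x in l, c ≤ f x) : limsup (fun x => (f x : EReal)) l = ⊤ := by
  refine EReal.eq_top_iff_forall_lt _ |>.2 fun c => ?_
  exact (EReal.coe_lt_coe_iff.2 (lt_add_one c)).trans_le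
    (le_limsup_of_frequently_le' ((hf (c + 1)).mono fun x hx => EReal.coe_le_coe_iff.2 hx))

theorem EReal.liminf_coe_eq_bot_of_forall_frequently_le {α : Type*} {l : Filter α}
    {f : α → ℝ} (hf : ∀ c, ∃ᶠ x in l, f x ≤ c) : liminf (fun x => (f x : EReal)) l = ⊥ := by
  refine EReal.eq_bot_iff_forall_lt _ |>.2 fun c => ?_
  exact (liminf_le_of_frequently_le'
    ((hf (c - 1)).mono fun x hx => EReal.coe_le_coe_iff.2 hx)).trans_lt
    (EReal.coe_lt_coe_iff.2 (sub_one_lt c))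

theorem surjOn_Ici_univ_of_frequently_ge_of_frequently_le {f : ℝ → ℝ} {a : ℝ}
    (hf : ContinuousOn f (Ici a)) (hbig : ∀ c, ∃ᶠ x in atTop, c ≤ f x)
    (hsmall : ∀ c, ∃ᶠ x in atTop, f x ≤ c) : SurjOn f (Ici a) univ := by
  intro y _
  obtain ⟨s, hys, has⟩ := ((hbig y).and_eventually (eventually_ge_atTop a)).exists
  obtain ⟨t, hty, hat⟩ := ((hsmall y).and_eventually (eventually_ge_atTop a)).exists
  exact isPreconnected_Ici.intermediate_value hat has hf ⟨hty, hys⟩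

theorem integral_mul_sin (a b : ℝ) :
    ∫ x in a..b, x * sin x = (sin b - b * cos b) - (sin a - a * cos a) := by
  refine intervalIntegral.integral_eq_sub_of_hasDerivAt (f := fun x => sin x - x * cos x)
    (fun x _ => ?_) ((by fun_prop : Continuous fun x : ℝ => x * sin x).intervalIntegrable a b)
  exact ((hasDerivAt_sin x).sub ((hasDerivAt_id' x).mul (hasDerivAt_cos x))).congr_deriv
    (by ring)

theorem average_integral_mul_sin {k : ℝ} (hk : k ≠ 0) :
    (1 / k) * ∫ κ in (0 : ℝ)..k, κ * sin κ = sin k / k - cos k := by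
  rw [integral_mul_sin, sin_zero, zero_mul, sub_zero, sub_zero]
  field_simp

theorem average_integral_mul_sin_le_two {k : ℝ} (hk : 0 < k) :
    (1 / k) * ∫ κ in (0 : ℝ)..k, κ * sin κ ≤ 2 := by
  rw [average_integral_mul_sin hk.ne']
  have := (div_le_one hk).2 (sin_le hk.le)
  linarith [neg_one_le_cos k]

/-- **`N(s) = s·sin s` is probing but not Nussbaum (Section 2.2)**.
The continuous function `N(s) = s·sin s` satisfies `limsup_{s→∞} N(s) = +∞` and
`liminf_{s→∞} N(s) = −∞` (hence is surjective onto `ℝ`), but fails the Nussbaum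
properties: for every `k > 0`, `(1/k)·∫₀^k κ·sin κ dκ = (sin k)/k − cos k ≤ 2`, so
the Nussbaum supremum condition fails at `k⁰ = 0`. -/
theorem sin_probing_not_nussbaum :
    limsup (fun s : ℝ => ((s * Real.sin s : ℝ) : EReal)) atTop = ⊤ ∧
    liminf (fun s : ℝ => ((s * Real.sin s : ℝ) : EReal)) atTop = ⊥ ∧
    SurjOn (fun s : ℝ => s * Real.sin s) (Ici 0) univ ∧
    (∀ k : ℝ, 0 < k →
      (1 / k) * ∫ κ in (0 : ℝ)..k, κ * Real.sin κ = Real.sin k / k - Real.cos k) ∧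
    (∀ k : ℝ, 0 < k → (1 / k) * ∫ κ in (0 : ℝ)..k, κ * Real.sin κ ≤ 2) ∧
    ¬ (∀ M : ℝ, ∃ k : ℝ, 0 < k ∧
        M < (1 / (k - 0)) * ∫ κ in (0 : ℝ)..k, (fun s => s * Real.sin s) κ) := by
  refine ⟨EReal.limsup_coe_eq_top_of_forall_frequently_ge frequently_le_mul_sin_atTop,
    EReal.liminf_coe_eq_bot_of_forall_frequently_le frequently_mul_sin_le_atTop,
    surjOn_Ici_univ_of_frequently_ge_of_frequently_le
      (continuous_id.mul continuous_sin).continuousOn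
      frequently_le_mul_sin_atTop frequently_mul_sin_le_atTop,
    fun k hk => average_integral_mul_sin hk.ne', fun k hk => average_integral_mul_sin_le_two hk,
    fun hunbounded => ?_⟩
  obtain ⟨k, hk, hlt⟩ := hunbounded 2
  rw [sub_zero] at hlt
  exact (average_integral_mul_sin_le_two hk).not_gt hlt
end

section
/- For every integer k ≥ 1 set s_k := (1/2)·e^{kπ}·(e^π − 1). Then 0 < sin(π − ln 2), and for every v ∈ ℝ with 1/2 ≤ |v| ≤ 1: if k is even, then sin(π − ln 2) < sin(ln(1 + s_k·|v|)) < 1, and if k is odd, then sin(π − ln 2) < −sin(ln(1 + s_k·|v|)) < 1. -/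
open Real

lemma exp_pi_div_two_gt : (4.3 : ℝ) < Real.exp (π / 2) := by
  have h1 : (1.5 : ℝ) < π / 2 := by nlinarith [Real.pi_gt_three]
  have h2 : Real.exp 1.5 ≤ Real.exp (π / 2) := Real.exp_le_exp.mpr h1.le
  have he : (2.7182818283 : ℝ) < Real.exp 1 := Real.exp_one_gt_d9
  have h3 : Real.exp 1.5 * Real.exp 1.5 = Real.exp 3 := by
    rw [← Real.exp_add]; norm_num
  have h4 : Real.exp 3 = Real.exp 1 * Real.exp 1 * Real.exp 1 := by
    rw [← Real.exp_add, ← Real.exp_add]; norm_num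
  have hpos : (0 : ℝ) < Real.exp 1.5 := Real.exp_pos _
  nlinarith [Real.exp_pos (1.5 : ℝ)]

/-- Key bracketing: for `k ≥ 1`, `1/2 ≤ |v| ≤ 1`, the log lies in
`(kπ + π/2, (k+1)π − ln 2)`. -/
lemma log_bracket (k : ℕ) (hk : 1 ≤ k) (w : ℝ) (hw1 : 1 / 2 ≤ w) (hw2 : w ≤ 1) :
    k * π + π / 2 < Real.log (1 + (1 / 2) * Real.exp (k * π) * (Real.exp π - 1) * w) ∧
    Real.log (1 + (1 / 2) * Real.exp (k * π) * (Real.exp π - 1) * w) < (k + 1) * π - Real.log 2 := by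
  set t := Real.exp (π / 2) with ht
  have ht43 : (4.3 : ℝ) < t := exp_pi_div_two_gt
  have hE : Real.exp π = t * t := by rw [ht, ← Real.exp_add]; ring_nf
  set A := Real.exp (k * π) with hA
  have hApos : (0 : ℝ) < A := Real.exp_pos _
  have hAge : Real.exp π ≤ A := by
    apply Real.exp_le_exp.mpr
    have : (1 : ℝ) ≤ (k : ℝ) := by exact_mod_cast hk
    nlinarith [Real.pi_pos]
  have hE1 : (0 : ℝ) < Real.exp π - 1 := by nlinarith
  set s := (1 / 2) * A * (Real.exp π - 1) * w with hs
  have hspos : 0 < s := by positivity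
  have h1s : (0 : ℝ) < 1 + s := by linarith
  constructor
  · rw [Real.lt_log_iff_exp_lt h1s]
    have hexp : Real.exp (k * π + π / 2) = A * t := by rw [Real.exp_add]
    rw [hexp]
    have hlb : (1 / 4) * A * (Real.exp π - 1) ≤ s := by
      rw [hs]; nlinarith
    -- A*t < 1 + (1/4)*A*(t*t - 1)
    have hq : (0:ℝ) < t * t - 4 * t - 1 := by nlinarith
    have : A * t < 1 + (1 / 4) * A * (Real.exp π - 1) := by
      rw [hE]; nlinarith [mul_pos hApos hq]
    linarith
  · rw [Real.log_lt_iff_lt_exp h1s]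
    have hexp : Real.exp ((k + 1) * π - Real.log 2) = A * Real.exp π / 2 := by
      rw [Real.exp_sub, Real.exp_log (by norm_num : (0:ℝ) < 2)]
      rw [show ((k : ℝ) + 1) * π = k * π + π by ring, Real.exp_add]
    rw [hexp]
    have hub : s ≤ (1 / 2) * A * (Real.exp π - 1) := by
      rw [hs]; nlinarith
    have hA2 : (2 : ℝ) < A := by nlinarith
    nlinarith

/-- **Sine estimates (Remark 1.4(b))**.
With `s_k = (1/2)·e^{kπ}·(e^π − 1)` (`k ≥ 1`), one has `0 < sin(π − ln 2)`, and for every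
`v ∈ ℝ` with `1/2 ≤ |v| ≤ 1`: if `k` is even then
`sin(π − ln 2) < sin(ln(1 + s_k·|v|)) < 1`, and if `k` is odd then
`sin(π − ln 2) < −sin(ln(1 + s_k·|v|)) < 1`. -/
theorem sin_estimates_sk :
    0 < Real.sin (π - Real.log 2) ∧
    ∀ k : ℕ, 1 ≤ k →
      ∀ v : ℝ, 1 / 2 ≤ |v| → |v| ≤ 1 →
        (Even k →
          Real.sin (π - Real.log 2)
              < Real.sin (Real.log (1 + (1 / 2) * Real.exp (k * π) * (Real.exp π - 1) * |v|)) ∧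
          Real.sin (Real.log (1 + (1 / 2) * Real.exp (k * π) * (Real.exp π - 1) * |v|)) < 1) ∧
        (Odd k →
          Real.sin (π - Real.log 2)
              < -Real.sin (Real.log (1 + (1 / 2) * Real.exp (k * π) * (Real.exp π - 1) * |v|)) ∧
          -Real.sin (Real.log (1 + (1 / 2) * Real.exp (k * π) * (Real.exp π - 1) * |v|)) < 1) := by
  have hln2 : Real.log 2 < 0.6931471808 := Real.log_two_lt_d9
  have hln2pos : (0 : ℝ) < Real.log 2 := Real.log_pos (by norm_num)
  have hpi : (3 : ℝ) < π := Real.pi_gt_three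
  have hsinpos : 0 < Real.sin (π - Real.log 2) := by
    apply Real.sin_pos_of_pos_of_lt_pi <;> linarith
  refine ⟨hsinpos, fun k hk v hv1 hv2 => ?_⟩
  obtain ⟨hlo, hhi⟩ := log_bracket k hk |v| hv1 hv2
  set x := Real.log (1 + (1 / 2) * Real.exp (k * π) * (Real.exp π - 1) * |v|) with hx
  set a := x - k * π with ha
  have hxa : x = a + k * π := by rw [ha]; ring
  have hsinx : Real.sin x = (-1 : ℝ) ^ k * Real.sin a := by
    rw [hxa, Real.sin_add_nat_mul_pi]
  have ha1 : π / 2 < a := by rw [ha]; linarith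
  have ha2 : a < π - Real.log 2 := by rw [ha]; linarith
  -- sin(π - ln 2) < sin a and sin a < 1
  have key1 : Real.sin (π - Real.log 2) < Real.sin a := by
    rw [show Real.sin a = Real.sin (π - a) by rw [Real.sin_pi_sub],
        show Real.sin (π - Real.log 2) = Real.sin (Real.log 2) by rw [Real.sin_pi_sub]]
    apply Real.sin_lt_sin_of_lt_of_le_pi_div_two (by linarith) (by linarith) (by linarith)
  have key2 : Real.sin a < 1 := by
    rw [show Real.sin a = Real.sin (π - a) by rw [Real.sin_pi_sub]]
    have := Real.sin_lt_sin_of_lt_of_le_pi_div_two (x := π - a) (y := π / 2)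
      (by linarith) le_rfl (by linarith)
    rwa [Real.sin_pi_div_two] at this
  constructor
  · intro hke
    rw [hsinx, hke.neg_one_pow, one_mul]
    exact ⟨key1, key2⟩
  · intro hko
    rw [hsinx, hko.neg_one_pow, neg_one_mul, neg_neg]
    exact ⟨key1, key2⟩
end

section
/- Let f₁ : ℝ → ℝ and f₂ : ℝ → (0,∞) be continuous, and let β : ℝ → ℝ be continuous, surjective and satisfy |β(τ)| → ∞ as |τ| → ∞. Set A₁ := [−1,−1/2] ∪ [1/2,1]. Then for every compact set K₁ ⊆ ℝ and every M ∈ ℝ there exists s ∈ ℝ such that v·(f₁(z) + f₂(z)·β(−s·v)) > M for all z ∈ K₁ and all v ∈ A₁. In particular, the function (z,u) ↦ f₁(z) + f₂(z)·β(u), i.e. the scalar controlled system ẏ(t) = f₁(y(t)) + f₂(y(t))·β(u(t)), has the high-gain property with v* = 1/2: the function χ(s) := min{ v·(f₁(z) + f₂(z)·β(−s·v)) : z ∈ K₁, v ∈ A₁ } satisfies sup_{s∈ℝ} χ(s) = ∞ for every compact K₁ ⊆ ℝ. -/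
open Set Filter

noncomputable section

section HighGainAux

open Function

private lemma sign_lemma (g : ℝ → ℝ) (hg : Continuous g)
    (h : Tendsto (fun t => |g t|) atTop atTop) :
    Tendsto g atTop atTop ∨ Tendsto g atTop atBot := by
  obtain ⟨T, hT⟩ := eventually_atTop.1 (h.eventually_ge_atTop 1)
  have hne : ∀ t, T ≤ t → g t ≠ 0 := by
    intro t ht h0
    have := hT t ht
    rw [h0, abs_zero] at this; linarith
  rcases (hne T le_rfl).lt_or_gt with hneg | hpos
  · right
    have hall : ∀ t, T ≤ t → g t < 0 := by
      intro t ht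
      by_contra hle
      push_neg at hle
      have h0 : (0:ℝ) ∈ uIcc (g T) (g t) := by
        rw [mem_uIcc]; left; exact ⟨hneg.le, hle⟩
      obtain ⟨c, hc, hc0⟩ := intermediate_value_uIcc (hg.continuousOn (s := uIcc T t)) h0
      rw [uIcc_of_le ht] at hc
      exact hne c hc.1 hc0
    have : (fun t => -|g t|) =ᶠ[atTop] g :=
      eventually_atTop.2 ⟨T, fun t ht => by show -|g t| = g t; rw [abs_of_neg (hall t ht)]; ring⟩
    exact (tendsto_neg_atTop_atBot.comp h).congr' this
  · left
    have hall : ∀ t, T ≤ t → 0 < g t := by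
      intro t ht
      by_contra hle
      push_neg at hle
      have h0 : (0:ℝ) ∈ uIcc (g T) (g t) := by
        rw [mem_uIcc]; right; exact ⟨hle, hpos.le⟩
      obtain ⟨c, hc, hc0⟩ := intermediate_value_uIcc (hg.continuousOn (s := uIcc T t)) h0
      rw [uIcc_of_le ht] at hc
      exact hne c hc.1 hc0
    have : (fun t => |g t|) =ᶠ[atTop] g :=
      eventually_atTop.2 ⟨T, fun t ht => by show |g t| = g t; exact abs_of_pos (hall t ht)⟩
    exact h.congr' this

private lemma not_both (β : ℝ → ℝ) (hc : Continuous β) (hs : Surjective β)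
    (h1 : Tendsto β atTop atTop) (h2 : Tendsto β atBot atTop) : False := by
  obtain ⟨T1, hT1⟩ := eventually_atTop.1 (h1.eventually_ge_atTop 0)
  obtain ⟨T2, hT2⟩ := eventually_atBot.1 (h2.eventually_ge_atTop 0)
  have hbdd : ∃ b, ∀ t, b ≤ β t := by
    rcases le_or_gt T2 T1 with hTT | hTT
    · obtain ⟨x, hx, hmin⟩ := isCompact_Icc.exists_isMinOn (Set.nonempty_Icc.2 hTT)
        hc.continuousOn
      refine ⟨min (β x) 0, fun t => ?_⟩
      rcases le_or_gt t T2 with h | h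
      · exact le_trans (min_le_right _ _) (hT2 t h)
      rcases le_or_gt T1 t with h' | h'
      · exact le_trans (min_le_right _ _) (hT1 t h')
      · exact le_trans (min_le_left _ _) (hmin ⟨h.le, h'.le⟩)
    · refine ⟨0, fun t => ?_⟩
      rcases le_or_gt t T2 with h | h
      · exact hT2 t h
      · exact hT1 t (le_trans hTT.le h.le)
  obtain ⟨b, hb⟩ := hbdd
  obtain ⟨t, ht⟩ := hs (b - 1)
  have := hb t
  rw [ht] at this; linarith

lemma chooseS (β : ℝ → ℝ) (hpos : Tendsto β atTop atTop)
    (hneg : Tendsto β atBot atBot) (B : ℝ) :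
    ∃ s : ℝ, (∀ v ∈ Icc (1/2:ℝ) 1, B ≤ β (-(s*v))) ∧
      (∀ v ∈ Icc (-1:ℝ) (-(1/2)), β (-(s*v)) ≤ -B) := by
  obtain ⟨T1, hT1⟩ := eventually_atTop.1 (hpos.eventually_ge_atTop B)
  obtain ⟨T2, hT2⟩ := eventually_atBot.1 (hneg.eventually_le_atBot (-B))
  set σ := max (2*T1) (max (-(2*T2)) 1) with hσdef
  have hσ1 : 2*T1 ≤ σ := le_max_left _ _
  have hσ2 : -(2*T2) ≤ σ := le_trans (le_max_left _ _) (le_max_right _ _)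
  have hσ0 : (1:ℝ) ≤ σ := le_trans (le_max_right _ _) (le_max_right _ _)
  refine ⟨-σ, fun v hv => ?_, fun v hv => ?_⟩
  · rw [show -(-σ*v) = σ*v by ring]
    exact hT1 _ (by nlinarith [hv.1, hv.2])
  · rw [show -(-σ*v) = σ*v by ring]
    exact hT2 _ (by nlinarith [hv.1, hv.2])

private lemma chooseS2 (β : ℝ → ℝ) (hβc : Continuous β) (hβs : Surjective β)
    (hbinf : Tendsto (fun τ => |β τ|) (cocompact ℝ) atTop) (B : ℝ) :
    ∃ s : ℝ, (∀ v ∈ Icc (1/2:ℝ) 1, B ≤ β (-(s*v))) ∧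
      (∀ v ∈ Icc (-1:ℝ) (-(1/2)), β (-(s*v)) ≤ -B) := by
  rw [cocompact_eq_atBot_atTop, tendsto_sup] at hbinf
  obtain ⟨hbot, htop⟩ := hbinf
  -- direction at atBot via reflection
  set g : ℝ → ℝ := fun t => β (-t) with hg
  have hgc : Continuous g := hβc.comp continuous_neg
  have hgabs : Tendsto (fun t => |g t|) atTop atTop :=
    (hbot.comp tendsto_neg_atTop_atBot)
  have hgd := sign_lemma g hgc hgabs
  have hβcomp : ∀ t : ℝ, β t = g (-t) := fun t => by simp [hg]
  have hBotOfg : Tendsto g atTop atTop → Tendsto β atBot atTop := by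
    intro h
    have := h.comp tendsto_neg_atBot_atTop
    exact this.congr fun t => by simp [hg]
  have hBotOfg' : Tendsto g atTop atBot → Tendsto β atBot atBot := by
    intro h
    have := h.comp tendsto_neg_atBot_atTop
    exact this.congr fun t => by simp [hg]
  rcases sign_lemma β hβc htop with hp | hn
  · rcases hgd with hgt | hgb
    · exact absurd (not_both β hβc hβs hp (hBotOfg hgt)) (fun h => h)
    · exact chooseS β hp (hBotOfg' hgb) B
  · rcases hgd with hgt | hgb
    · -- β atTop → atBot, β atBot → atTop : use g which goes top→top, bot→bot
      have hgtop : Tendsto g atTop atTop := hgt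
      have hgbot : Tendsto g atBot atBot := by
        have := hn.comp tendsto_neg_atBot_atTop
        exact this.congr fun t => by simp [hg]
      obtain ⟨s, h1, h2⟩ := chooseS g hgtop hgbot B
      refine ⟨-s, fun v hv => ?_, fun v hv => ?_⟩
      · have := h1 v hv
        simp only [hg] at this
        rwa [show -(-(s*v)) = -(-s*v) by ring] at this
      · have := h2 v hv
        simp only [hg] at this
        rwa [show -(-(s*v)) = -(-s*v) by ring] at this
    · -- both atBot : contradiction via -β
      exfalso
      apply not_both (fun t => -β t) hβc.neg
        (fun y => by obtain ⟨t, ht⟩ := hβs (-y); exact ⟨t, by show -β t = y; rw [ht]; ring⟩)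
      · exact tendsto_neg_atBot_atTop.comp hn
      · exact tendsto_neg_atBot_atTop.comp (hBotOfg' hgb)

private lemma main1 (f₁ f₂ β : ℝ → ℝ)
    (hf₁ : Continuous f₁) (hf₂ : Continuous f₂) (hf₂pos : ∀ z : ℝ, 0 < f₂ z)
    (hβc : Continuous β) (hβs : Function.Surjective β)
    (hbinf : Tendsto (fun τ => |β τ|) (cocompact ℝ) atTop) :
    ∀ K₁ : Set ℝ, IsCompact K₁ → ∀ M : ℝ, ∃ s : ℝ,
      ∀ z ∈ K₁, ∀ v ∈ Icc (-1 : ℝ) (-(1 / 2)) ∪ Icc (1 / 2 : ℝ) 1,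
        M < v * (f₁ z + f₂ z * β (-(s * v))) := by
  intro K₁ hK M
  rcases K₁.eq_empty_or_nonempty with rfl | hne
  · exact ⟨0, fun z hz => absurd hz (notMem_empty z)⟩
  obtain ⟨z₀, hz₀, hminf₂⟩ := hK.exists_isMinOn hne hf₂.continuousOn
  obtain ⟨z₁, hz₁, hmaxf₁⟩ := hK.exists_isMaxOn hne (continuous_abs.comp hf₁).continuousOn
  set c := f₂ z₀ with hc
  set C := |f₁ z₁| with hC
  have hcpos : 0 < c := hf₂pos z₀
  have hCnn : 0 ≤ C := abs_nonneg _
  set B := (C + 2*|M| + 1)/c with hB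
  have hcB : c * B = C + 2*|M| + 1 := by
    rw [hB]; field_simp
  have hBpos : 0 < B := by
    have : 0 < C + 2*|M| + 1 := by positivity
    rw [hB]; positivity
  obtain ⟨s, hs1, hs2⟩ := chooseS2 β hβc hβs hbinf B
  refine ⟨s, fun z hz v hv => ?_⟩
  have hCz : |f₁ z| ≤ C := hmaxf₁ hz
  have hcz : c ≤ f₂ z := hminf₂ hz
  have hM : M ≤ |M| := le_abs_self M
  have hM0 : (0:ℝ) ≤ |M| := abs_nonneg M
  have hf₁u : f₁ z ≤ C := le_trans (le_abs_self _) hCz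
  have hf₁l : -C ≤ f₁ z := (abs_le.1 hCz).1
  rcases hv with hv | hv
  · -- v ∈ [-1, -1/2]
    have hβv := hs2 v hv
    have h1 : f₂ z * β (-(s*v)) ≤ c * β (-(s*v)) := by
      have hβneg : β (-(s*v)) ≤ 0 := le_trans hβv (by linarith)
      nlinarith
    have h2 : c * β (-(s*v)) ≤ -(C + 2*|M| + 1) := by
      have := mul_le_mul_of_nonneg_left hβv hcpos.le
      rw [mul_neg, hcB] at this
      linarith
    have hx : f₁ z + f₂ z * β (-(s*v)) ≤ -(2*|M| + 1) := by linarith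
    nlinarith [mul_nonneg (show (0:ℝ) ≤ -(v + 1/2) by linarith [hv.2])
      (show (0:ℝ) ≤ -(f₁ z + f₂ z * β (-(s*v))) by linarith), hv.1, hv.2]
  · -- v ∈ [1/2, 1]
    have hβv := hs1 v hv
    have h1 : c * β (-(s*v)) ≤ f₂ z * β (-(s*v)) := by
      have hβpos : 0 ≤ β (-(s*v)) := le_trans hBpos.le hβv
      nlinarith
    have h2 : C + 2*|M| + 1 ≤ c * β (-(s*v)) := by
      have := mul_le_mul_of_nonneg_left hβv hcpos.le
      rw [hcB] at this
      linarith
    have hx : 2*|M| + 1 ≤ f₁ z + f₂ z * β (-(s*v)) := by linarith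
    nlinarith [mul_nonneg (show (0:ℝ) ≤ v - 1/2 by linarith [hv.1])
      (show (0:ℝ) ≤ f₁ z + f₂ z * β (-(s*v)) by linarith), hv.1, hv.2]

end HighGainAux

/-- **Input nonlinearities yield the high-gain property (Section 2.3)**.
Let `f₁ : ℝ → ℝ` and `f₂ : ℝ → (0,∞)` be continuous and let `β : ℝ → ℝ` be continuous,
surjective, with `|β(τ)| → ∞` as `|τ| → ∞`.  With `A₁ = [−1,−1/2] ∪ [1/2,1]`: for every
compact `K₁ ⊆ ℝ` and every `M ∈ ℝ` there exists `s ∈ ℝ` with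
`v·(f₁(z) + f₂(z)·β(−s·v)) > M` for all `z ∈ K₁`, `v ∈ A₁`.  In particular the system
`ẏ = f₁(y) + f₂(y)·β(u)` has the high-gain property with `v* = 1/2`:
`χ(s) = min{v·(f₁(z)+f₂(z)β(−sv)) : z ∈ K₁, v ∈ A₁}` satisfies
`sup_{s∈ℝ} χ(s) = ∞` for every nonempty compact `K₁`. -/
theorem input_nonlinearity_highGain (f₁ f₂ β : ℝ → ℝ)
    (hf₁ : Continuous f₁) (hf₂ : Continuous f₂) (hf₂pos : ∀ z : ℝ, 0 < f₂ z)
    (hβc : Continuous β) (hβs : Function.Surjective β)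
    (hbinf : Tendsto (fun τ => |β τ|) (cocompact ℝ) atTop) :
    (∀ K₁ : Set ℝ, IsCompact K₁ → ∀ M : ℝ, ∃ s : ℝ,
      ∀ z ∈ K₁, ∀ v ∈ Icc (-1 : ℝ) (-(1 / 2)) ∪ Icc (1 / 2 : ℝ) 1,
        M < v * (f₁ z + f₂ z * β (-(s * v)))) ∧
    (∀ K₁ : Set ℝ, IsCompact K₁ → K₁.Nonempty → ∀ M : ℝ, ∃ s : ℝ,
      M < sInf {x : ℝ | ∃ z ∈ K₁, ∃ v ∈ Icc (-1 : ℝ) (-(1 / 2)) ∪ Icc (1 / 2 : ℝ) 1,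
        x = v * (f₁ z + f₂ z * β (-(s * v)))}) := by
  refine ⟨main1 f₁ f₂ β hf₁ hf₂ hf₂pos hβc hβs hbinf, ?_⟩
  intro K₁ hK hne M
  obtain ⟨s, hs⟩ := main1 f₁ f₂ β hf₁ hf₂ hf₂pos hβc hβs hbinf K₁ hK (M + 1)
  refine ⟨s, ?_⟩
  obtain ⟨z, hz⟩ := hne
  have hv1 : (1:ℝ) ∈ Icc (-1 : ℝ) (-(1 / 2)) ∪ Icc (1 / 2 : ℝ) 1 :=
    Or.inr ⟨by norm_num, le_refl 1⟩
  have hmem : (1:ℝ) * (f₁ z + f₂ z * β (-(s * 1))) ∈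
      {x : ℝ | ∃ z ∈ K₁, ∃ v ∈ Icc (-1 : ℝ) (-(1 / 2)) ∪ Icc (1 / 2 : ℝ) 1,
        x = v * (f₁ z + f₂ z * β (-(s * v)))} := ⟨z, hz, 1, hv1, rfl⟩
  have hbd : M + 1 ≤ sInf {x : ℝ | ∃ z ∈ K₁, ∃ v ∈ Icc (-1 : ℝ) (-(1 / 2)) ∪ Icc (1 / 2 : ℝ) 1,
      x = v * (f₁ z + f₂ z * β (-(s * v)))} := by
    apply le_csInf ⟨_, hmem⟩
    rintro x ⟨z', hz', v, hv, rfl⟩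
    exact (hs z' hz' v hv).le
  linarith
end
end
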